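/- For a non-degenerate pseudo-multiplication ⊙, if φ is ⊙-infinite with O(φ) = φ > 0, then for all s > 0, φ ⊙ s ≥ φ. -/

import Mathlib

open Set Filter Topology
open scoped ENNReal

/-- A pseudo-multiplication on `[0,∞]`. -/
structure PseudoMul where
  mul : ℝ≥0∞ → ℝ≥0∞ → ℝ≥0∞
  assoc : ∀ a b c, mul (mul a b) c = mul a (mul b c)
  continuousOn : ContinuousOn (fun p : ℝ≥0∞ × ℝ≥0∞ => mul p.1 p.2) (Ioo 0 ⊤ ×ˢ univ)
  continuousOn_left : ∀ t, ContinuousOn (fun s => mul s t) (Ioi 0)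
  mono : ∀ ⦃a b : ℝ≥0∞⦄, a ≤ b → ∀ ⦃c d : ℝ≥0∞⦄, c ≤ d → mul a c ≤ mul b d
  one : ℝ≥0∞
  one_mul : ∀ t, mul one t = t
  eq_zero_of_mul : ∀ s t, mul s t = 0 → s = 0 ∨ t = 0
  zero_mul : ∀ t, mul 0 t = 0
  mul_zero : ∀ t, mul t 0 = 0

/-- The kernel `O(t) = ⨅_{s>0} s ⊙ t`. -/
noncomputable def PseudoMul.O (P : PseudoMul) (t : ℝ≥0∞) : ℝ≥0∞ :=
  ⨅ s ∈ Ioi (0 : ℝ≥0∞), P.mul s t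

namespace PseudoMul

lemma one_pos (P : PseudoMul) : 0 < P.one := by
  rcases (zero_le : 0 ≤ P.one).eq_or_lt with h | h
  · exfalso
    have h1 := P.one_mul 1
    rw [← h, P.zero_mul] at h1
    exact one_ne_zero h1.symm
  · exact h

lemma O_le (P : PseudoMul) {u : ℝ≥0∞} (t : ℝ≥0∞) (hu : 0 < u) :
    P.O t ≤ P.mul u t := iInf₂_le u hu

lemma fixed_eq_zero (P : PseudoMul) (hnd : P.O P.one = 0) {ψ : ℝ≥0∞}
    (hψ : P.O ψ = ψ) (hle : ψ ≤ P.one) : ψ = 0 := by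
  have h : P.O ψ ≤ P.O P.one :=
    le_iInf₂ fun u hu => (P.O_le ψ hu).trans (P.mono le_rfl hle)
  rw [hnd, hψ] at h
  exact le_antisymm h (zero_le : 0 ≤ ψ)

lemma mul_pos (P : PseudoMul) {a b : ℝ≥0∞} (ha : 0 < a) (hb : 0 < b) :
    0 < P.mul a b := by
  rcases (zero_le : 0 ≤ P.mul a b).eq_or_lt with h | h
  · rcases P.eq_zero_of_mul a b h.symm with h' | h'
    · exact absurd h' ha.ne'
    · exact absurd h' hb.ne'
  · exact h

lemma fixed_mul (P : PseudoMul) {ψ s : ℝ≥0∞} (hψ : P.O ψ = ψ) (hs : 0 < s) :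
    P.O (P.mul ψ s) = P.mul ψ s := by
  apply le_antisymm
  · exact (P.O_le _ P.one_pos).trans_eq (P.one_mul _)
  · refine le_iInf₂ fun u hu => ?_
    calc P.mul ψ s ≤ P.mul (P.mul u ψ) s :=
          P.mono (hψ.symm.le.trans (P.O_le ψ hu)) le_rfl
      _ = P.mul u (P.mul ψ s) := P.assoc u ψ s

lemma no_finite_fixed (P : PseudoMul) (hnd : P.O P.one = 0) {ψ : ℝ≥0∞}
    (hψ : P.O ψ = ψ) (h0 : 0 < ψ) (ht : ψ < ⊤) : False := by
  have hc : ContinuousWithinAt (fun p : ℝ≥0∞ × ℝ≥0∞ => P.mul p.1 p.2)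
      (Ioo 0 ⊤ ×ˢ univ) (ψ, 0) := P.continuousOn (ψ, 0) ⟨⟨h0, ht⟩, mem_univ _⟩
  have hmap : Tendsto (fun s : ℝ≥0∞ => ((ψ, s) : ℝ≥0∞ × ℝ≥0∞))
      (𝓝[>] (0 : ℝ≥0∞)) (𝓝[Ioo 0 ⊤ ×ˢ univ] (ψ, 0)) := by
    rw [tendsto_nhdsWithin_iff]
    refine ⟨((Continuous.prodMk_right ψ).tendsto 0).mono_left nhdsWithin_le_nhds, ?_⟩
    exact Filter.Eventually.of_forall fun s => ⟨⟨h0, ht⟩, mem_univ _⟩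
  have h2 : Tendsto (fun s : ℝ≥0∞ => P.mul ψ s) (𝓝[>] (0 : ℝ≥0∞)) (𝓝 0) := by
    have := hc.tendsto.comp hmap
    simpa [P.mul_zero, Function.comp_def] using this
  have hev : ∀ᶠ s in 𝓝[>] (0 : ℝ≥0∞), P.mul ψ s < P.one :=
    h2 (Iio_mem_nhds P.one_pos)
  obtain ⟨s, hslt, hs0⟩ := (hev.and eventually_mem_nhdsWithin).exists
  have hfix' := P.fixed_mul hψ hs0
  have hpos' := P.mul_pos h0 hs0
  have := P.fixed_eq_zero hnd hfix' hslt.le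
  exact hpos'.ne' this

end PseudoMul

theorem infinite_fixed_point_mul_ge (P : PseudoMul) (hnd : P.O P.one = 0)
    (φ : ℝ≥0∞) (hfix : P.O φ = φ) (hpos : 0 < φ) :
    ∀ s : ℝ≥0∞, 0 < s → φ ≤ P.mul φ s := by
  intro s hs
  have hφtop : φ = ⊤ := by
    by_contra h
    exact P.no_finite_fixed hnd hfix hpos (lt_top_iff_ne_top.2 h)
  have hfixs := P.fixed_mul hfix hs
  have hposs := P.mul_pos hpos hs
  rcases (le_top : P.mul φ s ≤ ⊤).eq_or_lt with h | h
  · rw [h, hφtop]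
  · exact (P.no_finite_fixed hnd hfixs hposs h).elim
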